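/- arXiv:2104.01270 — 2 statements merged into one kernel-verified Lean document; each statement's English description precedes it below -/
import Mathlib

section
/- Chaotic iteration soundness for acyclic flow graphs: let a program be a finite DAG with entry ℓ₀, edges labelled by statements, and define the abstract invariant map I : Loc → Σ♯ by I(ℓ₀) = φ₀ and I(ℓ) = the join over all incoming edges (ℓ' →s ℓ) of ⟦s⟧♯(I(ℓ')). If the abstract interpreter is locally sound and σ₀ ⊨ φ₀, then every concrete state reachable at location ℓ (by executing the statements along some path from ℓ₀ to ℓ starting at σ₀) models I(ℓ). -/
/-!
Every post-solution of the abstract dataflow inequations `⟦s⟧♯ (I ℓ') ⊑ I ℓ` along edges `ℓ' →s ℓ`,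
with `σ₀ ⊨ I ℓ₀`, is sound: by local soundness and monotonicity of `γ`, the sets `γ (I ℓ)` form an
inductive invariant of the concrete transition system, so they contain every reachable state.
The equations defining `I` make it such a post-solution, since no edge enters `ℓ₀` and each
incoming transfer is one of the terms of the join at any other `ℓ`.
-/

/-- Concrete reachability: σ is reachable at ℓ by executing the statements
along some path from the entry ℓ₀ starting at σ₀. -/
inductive Reach {Loc Stmt Cst : Type*} (edges : Finset (Loc × Stmt × Loc))
    (csem : Stmt → Cst → Option Cst) (ℓ0 : Loc) (σ0 : Cst) : Loc → Cst → Prop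
  | entry : Reach edges csem ℓ0 σ0 ℓ0 σ0
  | step {ℓ' : Loc} {σ : Cst} {s : Stmt} {ℓ : Loc} {σ' : Cst} :
      Reach edges csem ℓ0 σ0 ℓ' σ → (ℓ', s, ℓ) ∈ edges →
      csem s σ = some σ' → Reach edges csem ℓ0 σ0 ℓ σ'

namespace Reach

variable {Loc Stmt Cst : Type*} {edges : Finset (Loc × Stmt × Loc)}
  {csem : Stmt → Cst → Option Cst} {ℓ0 : Loc} {σ0 : Cst}

theorem mem_of_inductive_invariant (P : Loc → Set Cst) (h0 : σ0 ∈ P ℓ0)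
    (hstep : ∀ ℓ' s ℓ σ σ', (ℓ', s, ℓ) ∈ edges → σ ∈ P ℓ' → csem s σ = some σ' → σ' ∈ P ℓ)
    {ℓ : Loc} {σ : Cst} (h : Reach edges csem ℓ0 σ0 ℓ σ) : σ ∈ P ℓ := by
  induction h with
  | entry => exact h0
  | step _ hedge hsem ih => exact hstep _ _ _ _ _ hedge ih hsem

theorem mem_γ_of_postfixpoint {Abs : Type*} [Preorder Abs] (γ : Abs → Set Cst)
    (hγmono : ∀ a b : Abs, a ≤ b → γ a ⊆ γ b) (asem : Stmt → Abs → Abs)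
    (hsound : ∀ (σ : Cst) (φ : Abs) (s : Stmt) (σ' : Cst),
      σ ∈ γ φ → csem s σ = some σ' → σ' ∈ γ (asem s φ))
    (I : Loc → Abs) (h0 : σ0 ∈ γ (I ℓ0))
    (hpost : ∀ ℓ' s ℓ, (ℓ', s, ℓ) ∈ edges → asem s (I ℓ') ≤ I ℓ)
    {ℓ : Loc} {σ : Cst} (h : Reach edges csem ℓ0 σ0 ℓ σ) : σ ∈ γ (I ℓ) :=
  h.mem_of_inductive_invariant (fun ℓ => γ (I ℓ)) h0 fun ℓ' s ℓ σ σ' hedge hσ hsem =>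
    hγmono _ _ (hpost ℓ' s ℓ hedge) (hsound σ (I ℓ') s σ' hσ hsem)

end Reach

theorem chaotic_iteration_sound_acyclic_general
    {Loc Stmt Cst Abs : Type*} [DecidableEq Loc]
    [SemilatticeSup Abs] [OrderBot Abs]
    (edges : Finset (Loc × Stmt × Loc)) (ℓ0 : Loc)
    (γ : Abs → Set Cst)
    (hγmono : ∀ a b : Abs, a ≤ b → γ a ⊆ γ b)
    (csem : Stmt → Cst → Option Cst) (asem : Stmt → Abs → Abs)
    (hsound : ∀ (σ : Cst) (φ : Abs) (s : Stmt) (σ' : Cst),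
      σ ∈ γ φ → csem s σ = some σ' → σ' ∈ γ (asem s φ))
    (hentry : ∀ (ℓ' : Loc) (s : Stmt), (ℓ', s, ℓ0) ∉ edges)
    (σ0 : Cst) (φ0 : Abs) (h0 : σ0 ∈ γ φ0)
    (I : Loc → Abs) (hI0 : I ℓ0 = φ0)
    (hIeq : ∀ ℓ : Loc, ℓ ≠ ℓ0 →
      I ℓ = (edges.filter (fun e => e.2.2 = ℓ)).sup
              (fun e => asem e.2.1 (I e.1))) :
    ∀ (ℓ : Loc) (σ : Cst), Reach edges csem ℓ0 σ0 ℓ σ → σ ∈ γ (I ℓ) := by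
  have hpost : ∀ ℓ' s ℓ, (ℓ', s, ℓ) ∈ edges → asem s (I ℓ') ≤ I ℓ := by
    intro ℓ' s ℓ hedge
    have hne : ℓ ≠ ℓ0 := by
      rintro rfl
      exact hentry ℓ' s hedge
    rw [hIeq ℓ hne]
    exact Finset.le_sup (f := fun e => asem e.2.1 (I e.1))
      (Finset.mem_filter.mpr ⟨hedge, rfl⟩ : (ℓ', s, ℓ) ∈ edges.filter (fun e => e.2.2 = ℓ))
  intro ℓ σ h
  exact h.mem_γ_of_postfixpoint γ hγmono asem hsound I (hI0 ▸ h0) hpost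

/-- chaotic iteration soundness for acyclic flow graphs. -/
theorem chaotic_iteration_sound_acyclic
    {Loc Stmt Cst Abs : Type*} [Fintype Loc] [DecidableEq Loc]
    [SemilatticeSup Abs] [OrderBot Abs]
    (edges : Finset (Loc × Stmt × Loc)) (ℓ0 : Loc)
    (γ : Abs → Set Cst)
    (hγmono : ∀ a b : Abs, a ≤ b → γ a ⊆ γ b)
    (hγsup : ∀ a b : Abs, γ a ∪ γ b ⊆ γ (a ⊔ b))
    (csem : Stmt → Cst → Option Cst) (asem : Stmt → Abs → Abs)
    (hsound : ∀ (σ : Cst) (φ : Abs) (s : Stmt) (σ' : Cst),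
      σ ∈ γ φ → csem s σ = some σ' → σ' ∈ γ (asem s φ))
    (hacyc : Irreflexive
      (Relation.TransGen (fun ℓ' ℓ : Loc => ∃ s, (ℓ', s, ℓ) ∈ edges)))
    (hentry : ∀ (ℓ' : Loc) (s : Stmt), (ℓ', s, ℓ0) ∉ edges)
    (σ0 : Cst) (φ0 : Abs) (h0 : σ0 ∈ γ φ0)
    (I : Loc → Abs) (hI0 : I ℓ0 = φ0)
    (hIeq : ∀ ℓ : Loc, ℓ ≠ ℓ0 →
      I ℓ = (edges.filter (fun e => e.2.2 = ℓ)).sup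
              (fun e => asem e.2.1 (I e.1))) :
    ∀ (ℓ : Loc) (σ : Cst), Reach edges csem ℓ0 σ0 ℓ σ → σ ∈ γ (I ℓ) :=
  chaotic_iteration_sound_acyclic_general edges ℓ0 γ hγmono csem asem hsound hentry σ0 φ0 h0 I hI0
    hIeq
end

section
/- Dirtying correctness for acyclic dependency graphs: let G be a finite DAG with a value assignment consistent at every node (each non-input node's value equals the function of its predecessors' values). If an input node n is edited and all nodes forward-reachable from n are emptied (set to none), then for every node m not forward-reachable from n and distinct from n, the retained value at m is still consistent with the edited graph (i.e., equals the value recomputed from scratch in the edited graph). -/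
/-!
Acyclicity of a finite graph makes the edge relation well-founded, so two assignments that are
consistent with the same node functions can be compared by well-founded induction: on any set
of nodes closed under taking predecessors they agree as soon as they agree on its input nodes.
The nodes not reachable from `n` by a possibly empty path form such a set, and its input nodes
are inputs other than `n`, where the edit changed nothing.
-/

open Relation

theorem wellFounded_of_irrefl_transGen {V : Type*} [Finite V] (E : V → V → Prop)
    [Std.Irrefl (TransGen E)] : WellFounded E :=
  have : IsTrans V (TransGen E) := ⟨fun _ _ _ => TransGen.trans⟩
  Subrelation.wf TransGen.single (Finite.wellFounded_of_trans_of_irrefl (TransGen E))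

def IsConsistent {V Val : Type*} (inp : V → Prop) (f : V → (V → Val) → Val) (A : V → Val) :
    Prop :=
  ∀ v, ¬ inp v → A v = f v A

theorem IsConsistent.eqOn_of_predClosed {V Val : Type*} {E : V → V → Prop} (hwf : WellFounded E)
    {inp : V → Prop} {f : V → (V → Val) → Val}
    (hf : ∀ (v : V) (g g' : V → Val), (∀ u, E u v → g u = g' u) → f v g = f v g')
    {A A' : V → Val} (hA : IsConsistent inp f A) (hA' : IsConsistent inp f A') {S : Set V}
    (hS : ∀ v ∈ S, ∀ u, E u v → u ∈ S) (hinp : ∀ v ∈ S, inp v → A' v = A v) :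
    Set.EqOn A' A S := by
  intro v
  induction v using hwf.induction with
  | _ v ih =>
    intro hv
    by_cases hiv : inp v
    · exact hinp v hv hiv
    · rw [hA' v hiv, hA v hiv]
      exact hf v A' A fun u huv => ih u huv (hS v hv u huv)

theorem dirtying_correct_general {V Val : Type*} [Fintype V]
    (E : V → V → Prop) (hacyc : Irreflexive (Relation.TransGen E))
    (inp : V → Prop)
    (f : V → (V → Val) → Val)
    (hf : ∀ (v : V) (g g' : V → Val), (∀ u, E u v → g u = g' u) → f v g = f v g')
    (n : V)
    (A A' : V → Val)
    (hA : ∀ v, ¬ inp v → A v = f v A)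
    (hA' : ∀ v, ¬ inp v → A' v = f v A')
    (hagree : ∀ v, inp v → v ≠ n → A' v = A v) :
    ∀ m : V, ¬ Relation.TransGen E n m → m ≠ n → A' m = A m := by
  intro m hnm hmn
  have : Std.Irrefl (TransGen E) := ⟨hacyc⟩
  have hm : ¬ ReflTransGen E n m := by
    rw [reflTransGen_iff_eq_or_transGen]
    tauto
  refine IsConsistent.eqOn_of_predClosed (S := {v | ¬ ReflTransGen E n v})
    (wellFounded_of_irrefl_transGen E) hf hA hA' (fun v hv u huv hu => hv (hu.tail huv))
    (fun v hv hiv => hagree v hiv ?_) hm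
  rintro rfl
  exact hv ReflTransGen.refl

/-- dirtying correctness for acyclic dependency graphs: after
editing input node n, the from-scratch assignment of the edited graph agrees
with the old assignment on every node not forward-reachable from n (and ≠ n). -/
theorem dirtying_correct {V Val : Type*} [Fintype V]
    (E : V → V → Prop) (hacyc : Irreflexive (Relation.TransGen E))
    (inp : V → Prop) (hinp : ∀ v, inp v → ∀ u, ¬ E u v)
    (f : V → (V → Val) → Val)
    (hf : ∀ (v : V) (g g' : V → Val), (∀ u, E u v → g u = g' u) → f v g = f v g')
    (n : V) (hn : inp n)
    (A A' : V → Val)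
    (hA : ∀ v, ¬ inp v → A v = f v A)
    (hA' : ∀ v, ¬ inp v → A' v = f v A')
    (hagree : ∀ v, inp v → v ≠ n → A' v = A v) :
    ∀ m : V, ¬ Relation.TransGen E n m → m ≠ n → A' m = A m :=
  dirtying_correct_general E hacyc inp f hf n A A' hA hA' hagree
end
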